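/- arXiv:2103.16232 — 4 statements merged into one kernel-verified Lean document; each statement's English description precedes it below -/
import Mathlib

section
/- Suppose L_F and L_R are Lipschitz moduli of F and R on Ω_θ and β > L_F + L_R. If z̄ ∈ Ω_θ with O(z̄) < θ is a local minimizer of F + R over Ω₁ (i.e. z̄ ∈ Ω₁ and there exists ε > 0 with F(z̄) + R(z̄) ≤ F(z) + R(z) for all z ∈ Ω₁ with ‖z − z̄‖₂ ≤ ε), then z̄ is a local minimizer of O over Ω₂. -/
open scoped BigOperators

noncomputable section

/-- A point `z = (W, b₁, b₂, V)`. -/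
abbrev Pt (N N₀ N₁ : ℕ) : Type :=
  Matrix (Fin N₁) (Fin N₀) ℝ × (Fin N₁ → ℝ) × (Fin N₀ → ℝ) × Matrix (Fin N₁) (Fin N) ℝ

/-- ReLU: positive part. -/
def relu (y : ℝ) : ℝ := max y 0

variable {N N₀ N₁ : ℕ}

/-- squared Euclidean norm of a point `z = (W,b₁,b₂,V)`. -/
def sqnormPt (z : Pt N N₀ N₁) : ℝ :=
  (∑ i, ∑ j, (z.1 i j) ^ 2) + (∑ i, (z.2.1 i) ^ 2) + (∑ j, (z.2.2.1 j) ^ 2)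
    + (∑ i, ∑ n, (z.2.2.2 i n) ^ 2)

/-- Euclidean norm of a point. -/
def normPt (z : Pt N N₀ N₁) : ℝ := Real.sqrt (sqnormPt z)

/-- Euclidean distance between points. -/
def distPt (z z' : Pt N N₀ N₁) : ℝ := normPt (z - z')

/-- `(W xₙ + b₁)ᵢ`. -/
def preact (X : Matrix (Fin N₀) (Fin N) ℝ) (z : Pt N N₀ N₁) (i : Fin N₁) (n : Fin N) : ℝ :=
  (∑ j, z.1 i j * X j n) + z.2.1 i

/-- `(Wᵀ vₙ + b₂)ⱼ`. -/
def outPre (z : Pt N N₀ N₁) (j : Fin N₀) (n : Fin N) : ℝ :=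
  (∑ i, z.1 i j * z.2.2.2 i n) + z.2.2.1 j

/-- fidelity term `F(z)`. -/
def Fv (X : Matrix (Fin N₀) (Fin N) ℝ) (z : Pt N N₀ N₁) : ℝ :=
  (1 / (N : ℝ)) * ∑ n, ∑ j, (relu (outPre z j n) - X j n) ^ 2

/-- regularization term `R(z)`. -/
def Rv (lam₁ lam₂ : ℝ) (z : Pt N N₀ N₁) : ℝ :=
  lam₁ * (∑ n, ∑ i, z.2.2.2 i n) + lam₂ * ∑ i, ∑ j, (z.1 i j) ^ 2

/-- penalty term `P(z)`. -/
def Pv (β : ℝ) (X : Matrix (Fin N₀) (Fin N) ℝ) (z : Pt N N₀ N₁) : ℝ :=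
  β * ∑ n, ∑ i, (z.2.2.2 i n - relu (preact X z i n))

/-- objective `O(z) = F(z) + R(z) + P(z)`. -/
def Ov (lam₁ lam₂ β : ℝ) (X : Matrix (Fin N₀) (Fin N) ℝ) (z : Pt N N₀ N₁) : ℝ :=
  Fv X z + Rv lam₁ lam₂ z + Pv β X z

/-- `Ω₁ = {z : vₙ = (Wxₙ + b₁)₊}`. -/
def Omega1 (X : Matrix (Fin N₀) (Fin N) ℝ) : Set (Pt N N₀ N₁) :=
  {z | ∀ i n, z.2.2.2 i n = relu (preact X z i n)}

/-- `Ω₂ = {z : vₙ ≥ (Wxₙ + b₁)₊}`. -/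
def Omega2 (X : Matrix (Fin N₀) (Fin N) ℝ) : Set (Pt N N₀ N₁) :=
  {z | ∀ i n, relu (preact X z i n) ≤ z.2.2.2 i n}

/-- level set `Ω_θ = {z ∈ Ω₂ : O(z) ≤ θ}` (also used for `Ω_δ`). -/
def OmegaLev (lam₁ lam₂ β θ : ℝ) (X : Matrix (Fin N₀) (Fin N) ℝ) : Set (Pt N N₀ N₁) :=
  {z | z ∈ Omega2 X ∧ Ov lam₁ lam₂ β X z ≤ θ}

/-- `‖X‖₁`: maximum absolute column sum. -/
def Xcol1 (X : Matrix (Fin N₀) (Fin N) ℝ) : ℝ := ⨆ n, ∑ j, |X j n|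

/-- the constant `α`. -/
def alphaC (N N₀ N₁ : ℕ) (lam₁ lam₂ θ : ℝ) (X : Matrix (Fin N₀) (Fin N) ℝ) : ℝ :=
  max (θ / lam₁ + Real.sqrt ((N₁ : ℝ) * (N₀ : ℝ) * θ / lam₂) * Xcol1 X)
      (θ * Real.sqrt ((N₁ : ℝ) * (N₀ : ℝ) * θ) / (lam₁ * Real.sqrt lam₂)
        + Real.sqrt ((N : ℝ) * θ) + Xcol1 X)

/-- `Ω₃ = {z : ‖b₁‖_∞ ≤ α, ‖b₂‖_∞ ≤ α}`. -/
def Omega3 (lam₁ lam₂ θ : ℝ) (X : Matrix (Fin N₀) (Fin N) ℝ) : Set (Pt N N₀ N₁) :=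
  {z | (∀ i, |z.2.1 i| ≤ alphaC N N₀ N₁ lam₁ lam₂ θ X) ∧
       (∀ j, |z.2.2.1 j| ≤ alphaC N N₀ N₁ lam₁ lam₂ θ X)}

/-- `Z = Ω₂ ∩ Ω₃`. -/
def Zset (lam₁ lam₂ θ : ℝ) (X : Matrix (Fin N₀) (Fin N) ℝ) : Set (Pt N N₀ N₁) :=
  Omega2 X ∩ Omega3 lam₁ lam₂ θ X

/-- tangent cone of `C` at `zb`. -/
def TangentCone (C : Set (Pt N N₀ N₁)) (zb : Pt N N₀ N₁) : Set (Pt N N₀ N₁) :=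
  {d | ∃ zs : ℕ → Pt N N₀ N₁, ∃ ts : ℕ → ℝ,
      (∀ k, zs k ∈ C) ∧ (∀ k, 0 < ts k) ∧
      Filter.Tendsto ts Filter.atTop (nhds 0) ∧
      Filter.Tendsto (fun k => distPt (zs k) zb) Filter.atTop (nhds 0) ∧
      Filter.Tendsto (fun k => normPt ((ts k)⁻¹ • (zs k - zb) - d)) Filter.atTop (nhds 0)}

/-- `zb` is a d-stationary point of `f` over `C`:
`liminf_{t↓0} (f(zb + t d) - f(zb))/t ≥ 0` for every tangent direction `d`. -/
def DStationary (f : Pt N N₀ N₁ → ℝ) (C : Set (Pt N N₀ N₁)) (zb : Pt N N₀ N₁) : Prop :=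
  zb ∈ C ∧ ∀ d ∈ TangentCone C zb, ∀ ε : ℝ, 0 < ε → ∃ δ : ℝ, 0 < δ ∧
    ∀ t : ℝ, 0 < t → t < δ → -ε < (f (zb + t • d) - f zb) / t

/-- smoothing function `s_μ` of the ReLU. -/
def smoothRelu (μ y : ℝ) : ℝ :=
  if y < 0 then 0 else if y ≤ μ then y ^ 2 / (2 * μ) else y - μ / 2

/-- smoothed fidelity term `F̃(z, μ)`. -/
def Ftil (X : Matrix (Fin N₀) (Fin N) ℝ) (z : Pt N N₀ N₁) (μ : ℝ) : ℝ :=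
  (1 / (N : ℝ)) * (∑ n, ∑ j, (relu (outPre z j n)) ^ 2)
    + (1 / (N : ℝ)) * (∑ j, ∑ n, (X j n) ^ 2)
    - (2 / (N : ℝ)) * ∑ n, ∑ j, X j n * smoothRelu μ (outPre z j n)

/-- smoothed penalty term `P̃(z, μ)`. -/
def Ptil (β : ℝ) (X : Matrix (Fin N₀) (Fin N) ℝ) (z : Pt N N₀ N₁) (μ : ℝ) : ℝ :=
  β * ∑ n, ∑ i, (z.2.2.2 i n - smoothRelu μ (preact X z i n))

/-- smoothed objective `Õ(z, μ)`. -/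
def Otil (lam₁ lam₂ β : ℝ) (X : Matrix (Fin N₀) (Fin N) ℝ) (z : Pt N N₀ N₁) (μ : ℝ) : ℝ :=
  Ftil X z μ + Ptil β X z μ + Rv lam₁ lam₂ z

/-!
Let `p(z)` keep the weights and biases of `z` and reset `V` to `(W X + b₁)₊`. Then `p(z) ∈ Ω₁`,
`P(p(z)) = 0`, and `p` is Lipschitz and fixes `Ω₁`, so `p(z)` is close to `z̄` when `z` is.
On the segment from `z ∈ Ω₂` to `p(z)`, whose length is at most the violation
`Σ eᵀ(vₙ − (Wxₙ + b₁)₊)`, the penalty `P` falls at rate `β · violation` while `F + R` rises at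
rate at most `(L_F + L_R) · violation`; hence `O(p(z)) ≤ O(z)`. The Lipschitz bounds are only
available in `Ω_θ`, and when `O(z) < θ` the intermediate value theorem keeps the segment inside it:
a first exit point would have `O = θ`, yet `O` there is at most `O(z) < θ`. Local minimality on
`Ω₁` then gives `O(z̄) = (F + R)(z̄) ≤ (F + R)(p(z)) = O(p(z)) ≤ O(z)`.
-/

open Set

lemma sqnormPt_nonneg (w : Pt N N₀ N₁) : 0 ≤ sqnormPt w := by
  unfold sqnormPt; positivity

lemma normPt_smul (t : ℝ) (w : Pt N N₀ N₁) : normPt (t • w) = |t| * normPt w := by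
  have h : sqnormPt (t • w) = t ^ 2 * sqnormPt w := by
    simp only [sqnormPt, Prod.smul_fst, Prod.smul_snd, Matrix.smul_apply, Pi.smul_apply,
      smul_eq_mul, mul_pow, ← Finset.mul_sum]
    ring
  rw [normPt, normPt, h, Real.sqrt_mul (sq_nonneg t), Real.sqrt_sq_eq_abs]

lemma abs_fst_le_normPt (w : Pt N N₀ N₁) (i : Fin N₁) (j : Fin N₀) : |w.1 i j| ≤ normPt w := by
  refine Real.abs_le_sqrt ?_
  have hW : w.1 i j ^ 2 ≤ ∑ a, ∑ b, w.1 a b ^ 2 :=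
    (Finset.single_le_sum (f := fun b => w.1 i b ^ 2) (fun _ _ => sq_nonneg _)
      (Finset.mem_univ j)).trans
    (Finset.single_le_sum (f := fun a => ∑ b, w.1 a b ^ 2) (fun _ _ => by positivity)
      (Finset.mem_univ i))
  exact le_add_of_le_of_nonneg (le_add_of_le_of_nonneg (le_add_of_le_of_nonneg hW
    (by positivity)) (by positivity)) (by positivity)

lemma abs_fst_snd_le_normPt (w : Pt N N₀ N₁) (i : Fin N₁) : |w.2.1 i| ≤ normPt w := by
  refine Real.abs_le_sqrt ?_
  have hb : w.2.1 i ^ 2 ≤ ∑ a, w.2.1 a ^ 2 :=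
    Finset.single_le_sum (f := fun a => w.2.1 a ^ 2) (fun _ _ => sq_nonneg _) (Finset.mem_univ i)
  exact le_add_of_le_of_nonneg (le_add_of_le_of_nonneg (le_add_of_nonneg_of_le
    (by positivity) hb) (by positivity)) (by positivity)

lemma sqnormPt_le_add_of_eq {w w' : Pt N N₀ N₁} (hW : w.1 = w'.1) (hb₁ : w.2.1 = w'.2.1)
    (hb₂ : w.2.2.1 = w'.2.2.1) :
    sqnormPt w ≤ sqnormPt w' + ∑ i, ∑ n, w.2.2.2 i n ^ 2 := by
  unfold sqnormPt
  rw [hW, hb₁, hb₂]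
  have : 0 ≤ ∑ i, ∑ n, w'.2.2.2 i n ^ 2 := by positivity
  linarith

lemma sum_sum_sq_le_sq_sum_sum {ι κ : Type*} [Fintype ι] [Fintype κ] {g : ι → κ → ℝ}
    (hg : ∀ i k, 0 ≤ g i k) : ∑ i, ∑ k, g i k ^ 2 ≤ (∑ k, ∑ i, g i k) ^ 2 := by
  rw [Finset.sum_comm (f := fun k i => g i k)]
  calc ∑ i, ∑ k, g i k ^ 2 ≤ ∑ i, (∑ k, g i k) ^ 2 :=
        Finset.sum_le_sum fun i _ => Finset.sum_sq_le_sq_sum_of_nonneg fun k _ => hg i k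
    _ ≤ (∑ i, ∑ k, g i k) ^ 2 :=
        Finset.sum_sq_le_sq_sum_of_nonneg fun i _ => Finset.sum_nonneg fun k _ => hg i k

theorem ContinuousOn.le_left_of_sublevel_le_left {φ : ℝ → ℝ} {a b θ : ℝ} (hab : a ≤ b)
    (hφ : ContinuousOn φ (Icc a b)) (ha : φ a < θ)
    (h : ∀ s ∈ Icc a b, φ s ≤ θ → φ s ≤ φ a) : φ b ≤ φ a := by
  refine h b ⟨hab, le_rfl⟩ (not_lt.mp fun hb => ?_)
  obtain ⟨c, hc, hcθ⟩ := intermediate_value_Icc hab hφ ⟨ha.le, hb.le⟩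
  linarith [h c hc hcθ.le]

section

variable (X : Matrix (Fin N₀) (Fin N) ℝ)

def violation (z : Pt N N₀ N₁) : ℝ :=
  ∑ n, ∑ i, (z.2.2.2 i n - relu (preact X z i n))

lemma Pv_eq_mul_violation (β : ℝ) (z : Pt N N₀ N₁) : Pv β X z = β * violation X z := rfl

lemma violation_eq_zero_of_mem_Omega1 {z : Pt N N₀ N₁} (hz : z ∈ Omega1 X) :
    violation X z = 0 := by
  simp [violation, ← hz _ _]

lemma Ov_eq_of_mem_Omega1 (lam₁ lam₂ β : ℝ) {z : Pt N N₀ N₁} (hz : z ∈ Omega1 X) :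
    Ov lam₁ lam₂ β X z = Fv X z + Rv lam₁ lam₂ z := by
  rw [Ov, Pv_eq_mul_violation, violation_eq_zero_of_mem_Omega1 X hz, mul_zero, add_zero]

lemma Omega1_subset_Omega2 : (Omega1 X : Set (Pt N N₀ N₁)) ⊆ Omega2 X :=
  fun _ hz i n => (hz i n).ge

lemma preact_sub (z z' : Pt N N₀ N₁) (i : Fin N₁) (n : Fin N) :
    preact X (z - z') i n = preact X z i n - preact X z' i n := by
  simp only [preact, Prod.fst_sub, Prod.snd_sub, Matrix.sub_apply, Pi.sub_apply, sub_mul,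
    Finset.sum_sub_distrib]
  ring

lemma abs_preact_le (w : Pt N N₀ N₁) (i : Fin N₁) (n : Fin N) :
    |preact X w i n| ≤ (∑ j, |X j n| + 1) * normPt w :=
  calc |preact X w i n| ≤ |∑ j, w.1 i j * X j n| + |w.2.1 i| := abs_add_le _ _
    _ ≤ ∑ j, |w.1 i j| * |X j n| + |w.2.1 i| := by
        gcongr
        simpa only [abs_mul] using
          Finset.abs_sum_le_sum_abs (fun j => w.1 i j * X j n) Finset.univ
    _ ≤ ∑ j, normPt w * |X j n| + normPt w := by
        gcongr with j
        · exact abs_fst_le_normPt w i j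
        · exact abs_fst_snd_le_normPt w i
    _ = (∑ j, |X j n| + 1) * normPt w := by rw [← Finset.mul_sum]; ring

def projOmega1 (z : Pt N N₀ N₁) : Pt N N₀ N₁ :=
  (z.1, z.2.1, z.2.2.1, fun i n => relu (preact X z i n))

lemma projOmega1_mem (z : Pt N N₀ N₁) : projOmega1 X z ∈ Omega1 X := fun _ _ => rfl

lemma projOmega1_eq_self {z : Pt N N₀ N₁} (hz : z ∈ Omega1 X) : projOmega1 X z = z := by
  ext <;> simp [projOmega1, ← hz _ _]

lemma exists_distPt_projOmega1_le :
    ∃ C, 0 < C ∧ ∀ z z' : Pt N N₀ N₁,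
      distPt (projOmega1 X z) (projOmega1 X z') ≤ C * distPt z z' := by
  have hK : 0 ≤ ∑ _i : Fin N₁, ∑ n, (∑ j, |X j n| + 1) ^ 2 := by positivity
  refine ⟨Real.sqrt (1 + ∑ _i : Fin N₁, ∑ n, (∑ j, |X j n| + 1) ^ 2),
    Real.sqrt_pos.mpr (by linarith), fun z z' => ?_⟩
  set D := distPt z z'
  have hD : sqnormPt (z - z') = D ^ 2 := (Real.sq_sqrt (sqnormPt_nonneg _)).symm
  have hV : ∀ i n, (projOmega1 X z - projOmega1 X z').2.2.2 i n ^ 2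
      ≤ ((∑ j, |X j n| + 1) * D) ^ 2 := fun i n => by
    rw [← sq_abs]
    gcongr
    refine (abs_max_sub_max_le_abs _ _ 0).trans ?_
    rw [← preact_sub]
    exact abs_preact_le X _ i n
  have hsq : sqnormPt (projOmega1 X z - projOmega1 X z')
      ≤ (1 + ∑ _i : Fin N₁, ∑ n, (∑ j, |X j n| + 1) ^ 2) * D ^ 2 :=
    calc sqnormPt (projOmega1 X z - projOmega1 X z')
        ≤ sqnormPt (z - z') + ∑ i, ∑ n, (projOmega1 X z - projOmega1 X z').2.2.2 i n ^ 2 :=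
          sqnormPt_le_add_of_eq rfl rfl rfl
      _ ≤ sqnormPt (z - z') + ∑ i, ∑ n, ((∑ j, |X j n| + 1) * D) ^ 2 :=
          add_le_add le_rfl (Finset.sum_le_sum fun i _ => Finset.sum_le_sum fun n _ => hV i n)
      _ = (1 + ∑ _i : Fin N₁, ∑ n, (∑ j, |X j n| + 1) ^ 2) * D ^ 2 := by
          simp only [hD, mul_pow, ← Finset.sum_mul]
          ring
  calc distPt (projOmega1 X z) (projOmega1 X z')
      ≤ Real.sqrt ((1 + ∑ _i : Fin N₁, ∑ n, (∑ j, |X j n| + 1) ^ 2) * D ^ 2) :=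
        Real.sqrt_le_sqrt hsq
    _ = Real.sqrt (1 + ∑ _i : Fin N₁, ∑ n, (∑ j, |X j n| + 1) ^ 2) * D := by
        rw [Real.sqrt_mul (by linarith), Real.sqrt_sq (show 0 ≤ D from Real.sqrt_nonneg _)]

lemma normPt_projOmega1_sub_le {z : Pt N N₀ N₁} (hz : z ∈ Omega2 X) :
    normPt (projOmega1 X z - z) ≤ violation X z := by
  have hg : ∀ i n, 0 ≤ z.2.2.2 i n - relu (preact X z i n) := fun i n => sub_nonneg.mpr (hz i n)
  have hsq : sqnormPt (projOmega1 X z - z) ≤ violation X z ^ 2 :=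
    calc sqnormPt (projOmega1 X z - z)
        ≤ sqnormPt (0 : Pt N N₀ N₁) + ∑ i, ∑ n, (projOmega1 X z - z).2.2.2 i n ^ 2 :=
          sqnormPt_le_add_of_eq (by simp [projOmega1]) (by simp [projOmega1])
            (by simp [projOmega1])
      _ = ∑ i, ∑ n, (z.2.2.2 i n - relu (preact X z i n)) ^ 2 := by
          simp only [sqnormPt, Prod.fst_zero, Prod.snd_zero, Matrix.zero_apply, Pi.zero_apply,
            zero_pow two_ne_zero, Finset.sum_const_zero, zero_add]
          exact Finset.sum_congr rfl fun i _ => Finset.sum_congr rfl fun n _ => sub_sq_comm _ _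
      _ ≤ violation X z ^ 2 :=
          sum_sum_sq_le_sq_sum_sum (g := fun i n => z.2.2.2 i n - relu (preact X z i n)) hg
  exact Real.sqrt_le_iff.mpr ⟨Finset.sum_nonneg fun n _ => Finset.sum_nonneg fun i _ => hg i n, hsq⟩

lemma preact_add_smul_projOmega1_sub (z : Pt N N₀ N₁) (t : ℝ) :
    preact X (z + t • (projOmega1 X z - z)) = preact X z := by
  funext i n
  simp [preact, projOmega1]

lemma add_smul_projOmega1_sub_apply (z : Pt N N₀ N₁) (t : ℝ) (i : Fin N₁) (n : Fin N) :
    (z + t • (projOmega1 X z - z)).2.2.2 i n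
      = z.2.2.2 i n + t * (relu (preact X z i n) - z.2.2.2 i n) := rfl

lemma add_smul_projOmega1_sub_mem_Omega2 {z : Pt N N₀ N₁} (hz : z ∈ Omega2 X) {t : ℝ}
    (ht : t ≤ 1) : z + t • (projOmega1 X z - z) ∈ Omega2 X := by
  intro i n
  rw [preact_add_smul_projOmega1_sub, add_smul_projOmega1_sub_apply]
  nlinarith [hz i n]

lemma violation_add_smul_projOmega1_sub (z : Pt N N₀ N₁) (t : ℝ) :
    violation X (z + t • (projOmega1 X z - z)) = (1 - t) * violation X z := by
  simp only [violation, preact_add_smul_projOmega1_sub, Finset.mul_sum]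
  refine Finset.sum_congr rfl fun n _ => Finset.sum_congr rfl fun i _ => ?_
  rw [add_smul_projOmega1_sub_apply]
  ring

lemma continuous_Ov (lam₁ lam₂ β : ℝ) : Continuous (Ov lam₁ lam₂ β X : Pt N N₀ N₁ → ℝ) := by
  unfold Ov Fv Rv Pv outPre preact relu
  fun_prop

variable {X} in
lemma Ov_le_Ov_of_le_Pv_sub {lam₁ lam₂ β LF LR : ℝ} {S : Set (Pt N N₀ N₁)}
    (hLipF : ∀ z ∈ S, ∀ z' ∈ S, |Fv X z - Fv X z'| ≤ LF * distPt z z')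
    (hLipR : ∀ z ∈ S, ∀ z' ∈ S, |Rv lam₁ lam₂ z - Rv lam₁ lam₂ z'| ≤ LR * distPt z z')
    {z z' : Pt N N₀ N₁} (hz : z ∈ S) (hz' : z' ∈ S)
    (hP : (LF + LR) * distPt z z' ≤ Pv β X z' - Pv β X z) :
    Ov lam₁ lam₂ β X z ≤ Ov lam₁ lam₂ β X z' := by
  have hF := (le_abs_self _).trans (hLipF z hz z' hz')
  have hR := (le_abs_self _).trans (hLipR z hz z' hz')
  unfold Ov
  linarith

variable {X} in
lemma Ov_projOmega1_le {lam₁ lam₂ β θ LF LR : ℝ} (hLF : 0 ≤ LF) (hLR : 0 ≤ LR)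
    (hpen : LF + LR ≤ β)
    (hLipF : ∀ z ∈ (OmegaLev lam₁ lam₂ β θ X : Set (Pt N N₀ N₁)),
      ∀ z' ∈ OmegaLev lam₁ lam₂ β θ X, |Fv X z - Fv X z'| ≤ LF * distPt z z')
    (hLipR : ∀ z ∈ (OmegaLev lam₁ lam₂ β θ X : Set (Pt N N₀ N₁)),
      ∀ z' ∈ OmegaLev lam₁ lam₂ β θ X, |Rv lam₁ lam₂ z - Rv lam₁ lam₂ z'| ≤ LR * distPt z z')
    {z : Pt N N₀ N₁} (hz : z ∈ Omega2 X) (hzθ : Ov lam₁ lam₂ β X z < θ) :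
    Ov lam₁ lam₂ β X (projOmega1 X z) ≤ Ov lam₁ lam₂ β X z := by
  set q : ℝ → Pt N N₀ N₁ := fun t => z + t • (projOmega1 X z - z)
  have hq0 : q 0 = z := by simp [q]
  have hq1 : q 1 = projOmega1 X z := by simp [q]
  have hφ : ContinuousOn (fun t => Ov lam₁ lam₂ β X (q t)) (Icc 0 1) :=
    ((continuous_Ov X lam₁ lam₂ β).comp (by fun_prop)).continuousOn
  have hdescent : ∀ t ∈ Icc (0 : ℝ) 1,
      Ov lam₁ lam₂ β X (q t) ≤ θ → Ov lam₁ lam₂ β X (q t) ≤ Ov lam₁ lam₂ β X (q 0) := by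
    rintro t ⟨ht0, ht1⟩ htθ
    rw [hq0]
    refine Ov_le_Ov_of_le_Pv_sub hLipF hLipR
      ⟨add_smul_projOmega1_sub_mem_Omega2 X hz ht1, htθ⟩ ⟨hz, hzθ.le⟩ ?_
    calc (LF + LR) * distPt (q t) z = (LF + LR) * (t * normPt (projOmega1 X z - z)) := by
          rw [distPt, add_sub_cancel_left, normPt_smul, abs_of_nonneg ht0]
      _ ≤ β * (t * violation X z) :=
          mul_le_mul hpen (mul_le_mul_of_nonneg_left (normPt_projOmega1_sub_le X hz) ht0)
            (mul_nonneg ht0 (Real.sqrt_nonneg _)) (by linarith)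
      _ = Pv β X z - Pv β X (q t) := by
          rw [Pv_eq_mul_violation, Pv_eq_mul_violation, violation_add_smul_projOmega1_sub]
          ring
  simpa only [hq0, hq1] using
    hφ.le_left_of_sublevel_le_left zero_le_one (by rwa [hq0]) hdescent

end

theorem stmt10_general (N N₀ N₁ : ℕ)
    (lam₁ lam₂ β θ : ℝ)
    (X : Matrix (Fin N₀) (Fin N) ℝ)
    (LF LR : ℝ) (hLF : 0 ≤ LF) (hLR : 0 ≤ LR)
    (hLipF : ∀ z : Pt N N₀ N₁, z ∈ OmegaLev lam₁ lam₂ β θ X →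
      ∀ z' : Pt N N₀ N₁, z' ∈ OmegaLev lam₁ lam₂ β θ X →
        |Fv X z - Fv X z'| ≤ LF * distPt z z')
    (hLipR : ∀ z : Pt N N₀ N₁, z ∈ OmegaLev lam₁ lam₂ β θ X →
      ∀ z' : Pt N N₀ N₁, z' ∈ OmegaLev lam₁ lam₂ β θ X →
        |Rv lam₁ lam₂ z - Rv lam₁ lam₂ z'| ≤ LR * distPt z z')
    (hpen : LF + LR < β)
    (zb : Pt N N₀ N₁)
    (hzbO : Ov lam₁ lam₂ β X zb < θ) (hzb1 : zb ∈ Omega1 X)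
    (hloc : ∃ ε : ℝ, 0 < ε ∧ ∀ z : Pt N N₀ N₁, z ∈ Omega1 X → distPt z zb ≤ ε →
      Fv X zb + Rv lam₁ lam₂ zb ≤ Fv X z + Rv lam₁ lam₂ z) :
    zb ∈ Omega2 X ∧
    ∃ ε : ℝ, 0 < ε ∧ ∀ z : Pt N N₀ N₁, z ∈ Omega2 X → distPt z zb ≤ ε →
      Ov lam₁ lam₂ β X zb ≤ Ov lam₁ lam₂ β X z := by
  obtain ⟨ε, hε, hmin⟩ := hloc
  obtain ⟨C, hC, hproj⟩ := exists_distPt_projOmega1_le (N₁ := N₁) X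
  refine ⟨Omega1_subset_Omega2 X hzb1, ε / C, div_pos hε hC, fun z hz hdist => ?_⟩
  rcases le_or_gt θ (Ov lam₁ lam₂ β X z) with hθz | hzθ
  · linarith
  have hnear : distPt (projOmega1 X z) zb ≤ ε :=
    calc distPt (projOmega1 X z) zb = distPt (projOmega1 X z) (projOmega1 X zb) := by
          rw [projOmega1_eq_self X hzb1]
      _ ≤ C * distPt z zb := hproj z zb
      _ ≤ C * (ε / C) := by gcongr
      _ = ε := mul_div_cancel₀ ε hC.ne'
  calc Ov lam₁ lam₂ β X zb = Fv X zb + Rv lam₁ lam₂ zb := Ov_eq_of_mem_Omega1 X _ _ _ hzb1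
    _ ≤ Fv X (projOmega1 X z) + Rv lam₁ lam₂ (projOmega1 X z) :=
        hmin _ (projOmega1_mem X z) hnear
    _ = Ov lam₁ lam₂ β X (projOmega1 X z) :=
        (Ov_eq_of_mem_Omega1 X _ _ _ (projOmega1_mem X z)).symm
    _ ≤ Ov lam₁ lam₂ β X z := Ov_projOmega1_le hLF hLR hpen.le hLipF hLipR hz hzθ

theorem stmt10 (N N₀ N₁ : ℕ) (hN : 0 < N) (hN₀ : 0 < N₀) (hN₁ : 0 < N₁)
    (lam₁ lam₂ β θ : ℝ) (hlam₁ : 0 < lam₁) (hlam₂ : 0 < lam₂) (hbeta : 0 < β)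
    (X : Matrix (Fin N₀) (Fin N) ℝ)
    (hθ : (1 / (N : ℝ)) * ∑ j, ∑ n, (X j n) ^ 2 < θ)
    (LF LR : ℝ) (hLF : 0 ≤ LF) (hLR : 0 ≤ LR)
    (hLipF : ∀ z : Pt N N₀ N₁, z ∈ OmegaLev lam₁ lam₂ β θ X →
      ∀ z' : Pt N N₀ N₁, z' ∈ OmegaLev lam₁ lam₂ β θ X →
        |Fv X z - Fv X z'| ≤ LF * distPt z z')
    (hLipR : ∀ z : Pt N N₀ N₁, z ∈ OmegaLev lam₁ lam₂ β θ X →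
      ∀ z' : Pt N N₀ N₁, z' ∈ OmegaLev lam₁ lam₂ β θ X →
        |Rv lam₁ lam₂ z - Rv lam₁ lam₂ z'| ≤ LR * distPt z z')
    (hpen : LF + LR < β)
    (zb : Pt N N₀ N₁) (hzbLev : zb ∈ OmegaLev lam₁ lam₂ β θ X)
    (hzbO : Ov lam₁ lam₂ β X zb < θ) (hzb1 : zb ∈ Omega1 X)
    (hloc : ∃ ε : ℝ, 0 < ε ∧ ∀ z : Pt N N₀ N₁, z ∈ Omega1 X → distPt z zb ≤ ε →
      Fv X zb + Rv lam₁ lam₂ zb ≤ Fv X z + Rv lam₁ lam₂ z) :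
    zb ∈ Omega2 X ∧
    ∃ ε : ℝ, 0 < ε ∧ ∀ z : Pt N N₀ N₁, z ∈ Omega2 X → distPt z zb ≤ ε →
      Ov lam₁ lam₂ β X zb ≤ Ov lam₁ lam₂ β X z :=
  stmt10_general N N₀ N₁ lam₁ lam₂ β θ X LF LR hLF hLR hLipF hLipR hpen zb hzbO hzb1 hloc
end
end

section
/- If z̄ ∈ Ω_θ is a local minimizer of O over Z = Ω₂ ∩ Ω₃ (i.e. z̄ ∈ Z and there exists ε > 0 with O(z̄) ≤ O(z) for all z ∈ Z with ‖z − z̄‖₂ ≤ ε), then z̄ is a local minimizer of O over Ω₂. -/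
open scoped BigOperators

noncomputable section

variable {N N₀ N₁ : ℕ}

/-!
Let `z ∈ Ω₂` be close to `z̄` with `O(z) < O(z̄) ≤ θ`. Since every term of `O` is nonnegative on `Ω₂`,
`O(z) ≤ θ` bounds `∑ vₙ`, `‖W‖_F` and `F(z)`; this bounds the biases of `z` from above by `α` and the
linear parts `Wxₙ`, `Wᵀvₙ` by `α` in absolute value. Raising every bias coordinate below `-α` to `-α`
therefore changes no ReLU output, hence neither `O` nor membership in `Ω₂`, and the resulting point lies
in `Z`. As the biases of `z̄` are `≥ -α`, this clipping does not increase the distance to `z̄`, so local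
minimality over `Z` gives `O(z̄) ≤ O(z)`.
-/

open Finset

lemma relu_nonneg (y : ℝ) : 0 ≤ relu y := le_max_right y 0

lemma le_relu (y : ℝ) : y ≤ relu y := le_max_left y 0

lemma relu_add_max_neg {a A : ℝ} (b : ℝ) (ha : a ≤ A) :
    relu (a + max b (-A)) = relu (a + b) := by
  rcases le_total (-A) b with hb | hb
  · rw [max_eq_left hb]
  · rw [max_eq_right hb, relu, relu, max_eq_right (by linarith), max_eq_right (by linarith)]

lemma abs_max_neg_le {b A : ℝ} (hb : b ≤ A) (hA : 0 ≤ A) : |max b (-A)| ≤ A :=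
  abs_le.2 ⟨le_max_right _ _, max_le hb (by linarith)⟩

lemma sq_max_sub_le {x y m : ℝ} (hm : m ≤ y) : (max x m - y) ^ 2 ≤ (x - y) ^ 2 := by
  rcases le_total m x with h | h
  · rw [max_eq_left h]
  · rw [max_eq_right h]; nlinarith

lemma single_le_sum_sum {ι κ M : Type*} [Fintype ι] [Fintype κ] [AddCommMonoid M] [PartialOrder M]
    [IsOrderedAddMonoid M] {f : ι → κ → M} (hf : ∀ i j, 0 ≤ f i j) (i : ι) (j : κ) :
    f i j ≤ ∑ i, ∑ j, f i j :=
  (single_le_sum (fun j _ => hf i j) (mem_univ j)).trans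
    (single_le_sum (fun i _ => sum_nonneg fun j _ => hf i j) (mem_univ i))

lemma abs_sum_mul_le {ι : Type*} [Fintype ι] {a b : ι → ℝ} {c : ℝ} (ha : ∀ k, |a k| ≤ c) :
    |∑ k, a k * b k| ≤ c * ∑ k, |b k| := by
  rw [mul_sum]
  refine (abs_sum_le_sum_abs _ _).trans (sum_le_sum fun k _ => ?_)
  rw [abs_mul]
  exact mul_le_mul_of_nonneg_right (ha k) (abs_nonneg _)

section Xcol1

variable (X : Matrix (Fin N₀) (Fin N) ℝ)

lemma sum_abs_le_Xcol1 (n : Fin N) : ∑ j, |X j n| ≤ Xcol1 X :=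
  le_ciSup (f := fun n => ∑ j, |X j n|) (Set.finite_range _).bddAbove n

lemma abs_le_Xcol1 (j : Fin N₀) (n : Fin N) : |X j n| ≤ Xcol1 X :=
  (single_le_sum (fun j _ => abs_nonneg (X j n)) (mem_univ j)).trans (sum_abs_le_Xcol1 X n)

lemma Xcol1_nonneg : 0 ≤ Xcol1 X :=
  Real.iSup_nonneg fun _ => sum_nonneg fun _ _ => abs_nonneg _

end Xcol1

def clipBias (A : ℝ) (z : Pt N N₀ N₁) : Pt N N₀ N₁ :=
  (z.1, fun i => max (z.2.1 i) (-A), fun j => max (z.2.2.1 j) (-A), z.2.2.2)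

section clipBias

variable {X : Matrix (Fin N₀) (Fin N) ℝ} {A : ℝ} {z : Pt N N₀ N₁}

lemma relu_preact_clipBias {i : Fin N₁} {n : Fin N} (h : ∑ j, z.1 i j * X j n ≤ A) :
    relu (preact X (clipBias A z) i n) = relu (preact X z i n) :=
  relu_add_max_neg _ h

lemma relu_outPre_clipBias {j : Fin N₀} {n : Fin N} (h : ∑ i, z.1 i j * z.2.2.2 i n ≤ A) :
    relu (outPre (clipBias A z) j n) = relu (outPre z j n) :=
  relu_add_max_neg _ h

lemma clipBias_mem_Omega2 (hz : z ∈ Omega2 X) (hWX : ∀ i n, ∑ j, z.1 i j * X j n ≤ A) :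
    clipBias A z ∈ Omega2 X :=
  fun i n => (relu_preact_clipBias (hWX i n)).trans_le (hz i n)

lemma Ov_clipBias (lam₁ lam₂ β : ℝ) (hWX : ∀ i n, ∑ j, z.1 i j * X j n ≤ A)
    (hWV : ∀ j n, ∑ i, z.1 i j * z.2.2.2 i n ≤ A) :
    Ov lam₁ lam₂ β X (clipBias A z) = Ov lam₁ lam₂ β X z := by
  simp only [Ov, Fv, Pv, relu_outPre_clipBias (hWV _ _), relu_preact_clipBias (hWX _ _)]
  rfl

lemma distPt_clipBias_le {zb : Pt N N₀ N₁} (hb₁ : ∀ i, -A ≤ zb.2.1 i) (hb₂ : ∀ j, -A ≤ zb.2.2.1 j) :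
    distPt (clipBias A z) zb ≤ distPt z zb := by
  refine Real.sqrt_le_sqrt (add_le_add (add_le_add (add_le_add le_rfl ?_) ?_) le_rfl)
  · exact sum_le_sum fun i _ => sq_max_sub_le (hb₁ i)
  · exact sum_le_sum fun j _ => sq_max_sub_le (hb₂ j)

end clipBias

section alphaC

variable {lam₁ lam₂ θ : ℝ} {X : Matrix (Fin N₀) (Fin N) ℝ}

lemma le_alphaC_left :
    θ / lam₁ + √(N₁ * N₀ * θ / lam₂) * Xcol1 X ≤ alphaC N N₀ N₁ lam₁ lam₂ θ X :=
  le_max_left _ _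

lemma le_alphaC_right (hlam₂ : 0 ≤ lam₂) :
    Xcol1 X + √(N * θ) + √(N₁ * N₀ * θ / lam₂) * (θ / lam₁) ≤ alphaC N N₀ N₁ lam₁ lam₂ θ X := by
  refine le_of_eq_of_le ?_ (le_max_right _ _)
  rw [Real.sqrt_div' _ hlam₂]
  ring

lemma alphaC_nonneg (hlam₁ : 0 ≤ lam₁) (hθ : 0 ≤ θ) : 0 ≤ alphaC N N₀ N₁ lam₁ lam₂ θ X :=
  (add_nonneg (div_nonneg hθ hlam₁) (mul_nonneg (Real.sqrt_nonneg _) (Xcol1_nonneg X))).trans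
    le_alphaC_left

end alphaC

section OmegaLev

variable {lam₁ lam₂ β θ : ℝ} {X : Matrix (Fin N₀) (Fin N) ℝ} {z : Pt N N₀ N₁}

lemma Omega2.V_nonneg (hz : z ∈ Omega2 X) (i : Fin N₁) (n : Fin N) : 0 ≤ z.2.2.2 i n :=
  (relu_nonneg _).trans (hz i n)

lemma Fv_nonneg : 0 ≤ Fv X z := by
  unfold Fv
  positivity

lemma Pv_nonneg (hβ : 0 ≤ β) (hz : z ∈ Omega2 X) : 0 ≤ Pv β X z :=
  mul_nonneg hβ (sum_nonneg fun n _ => sum_nonneg fun i _ => sub_nonneg.2 (hz i n))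

lemma OmegaLev.terms_le (hlam₁ : 0 ≤ lam₁) (hlam₂ : 0 ≤ lam₂) (hβ : 0 ≤ β)
    (hz : z ∈ OmegaLev lam₁ lam₂ β θ X) :
    Fv X z ≤ θ ∧ lam₁ * ∑ n, ∑ i, z.2.2.2 i n ≤ θ ∧ lam₂ * ∑ i, ∑ j, z.1 i j ^ 2 ≤ θ := by
  obtain ⟨hz, hθ⟩ := hz
  have hV : 0 ≤ lam₁ * ∑ n, ∑ i, z.2.2.2 i n :=
    mul_nonneg hlam₁ (sum_nonneg fun n _ => sum_nonneg fun i _ => Omega2.V_nonneg hz i n)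
  have hW : 0 ≤ lam₂ * ∑ i, ∑ j, z.1 i j ^ 2 := by positivity
  have hF := Fv_nonneg (X := X) (z := z)
  have hP := Pv_nonneg hβ hz
  unfold Ov Rv at hθ
  exact ⟨by linarith, by linarith, by linarith⟩

lemma OmegaLev.theta_nonneg (hlam₁ : 0 ≤ lam₁) (hlam₂ : 0 ≤ lam₂) (hβ : 0 ≤ β)
    (hz : z ∈ OmegaLev lam₁ lam₂ β θ X) : 0 ≤ θ :=
  Fv_nonneg.trans (OmegaLev.terms_le hlam₁ hlam₂ hβ hz).1

lemma OmegaLev.sum_V_le (hlam₁ : 0 < lam₁) (hlam₂ : 0 ≤ lam₂) (hβ : 0 ≤ β)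
    (hz : z ∈ OmegaLev lam₁ lam₂ β θ X) (n : Fin N) : ∑ i, z.2.2.2 i n ≤ θ / lam₁ := by
  rw [le_div_iff₀' hlam₁]
  refine le_trans ?_ (OmegaLev.terms_le hlam₁.le hlam₂ hβ hz).2.1
  gcongr
  exact single_le_sum (f := fun n => ∑ i, z.2.2.2 i n)
    (fun n _ => sum_nonneg fun i _ => Omega2.V_nonneg hz.1 i n) (mem_univ n)

lemma OmegaLev.abs_W_le (hlam₁ : 0 ≤ lam₁) (hlam₂ : 0 < lam₂) (hβ : 0 ≤ β)
    (hz : z ∈ OmegaLev lam₁ lam₂ β θ X) (i : Fin N₁) (j : Fin N₀) :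
    |z.1 i j| ≤ √(N₁ * N₀ * θ / lam₂) := by
  have hθ := OmegaLev.theta_nonneg hlam₁ hlam₂.le hβ hz
  have hsize : (1 : ℝ) ≤ N₁ * N₀ := one_le_mul_of_one_le_of_one_le
    (Nat.one_le_cast.2 i.pos) (Nat.one_le_cast.2 j.pos)
  rw [← Real.sqrt_sq_eq_abs]
  refine Real.sqrt_le_sqrt ?_
  calc z.1 i j ^ 2 ≤ ∑ i, ∑ j, z.1 i j ^ 2 := single_le_sum_sum (fun _ _ => sq_nonneg _) i j
    _ ≤ θ / lam₂ := by
      rw [le_div_iff₀' hlam₂]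
      exact (OmegaLev.terms_le hlam₁ hlam₂.le hβ hz).2.2
    _ ≤ N₁ * N₀ * θ / lam₂ := by
      rw [mul_div_assoc]
      exact le_mul_of_one_le_left (by positivity) hsize

lemma OmegaLev.relu_outPre_le (hlam₁ : 0 ≤ lam₁) (hlam₂ : 0 ≤ lam₂) (hβ : 0 ≤ β)
    (hz : z ∈ OmegaLev lam₁ lam₂ β θ X) (j : Fin N₀) (n : Fin N) :
    relu (outPre z j n) ≤ Xcol1 X + √(N * θ) := by
  have hN : (0 : ℝ) < N := Nat.cast_pos.2 n.pos
  have hsq : (relu (outPre z j n) - X j n) ^ 2 ≤ N * θ := by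
    refine (single_le_sum_sum (f := fun n j => (relu (outPre z j n) - X j n) ^ 2)
      (fun _ _ => sq_nonneg _) n j).trans ?_
    have hF := (OmegaLev.terms_le hlam₁ hlam₂ hβ hz).1
    rwa [Fv, one_div, inv_mul_le_iff₀ hN] at hF
  have hrelu := (le_abs_self _).trans (Real.abs_le_sqrt hsq)
  linarith [(le_abs_self (X j n)).trans (abs_le_Xcol1 X j n)]

lemma OmegaLev.abs_sum_W_X_le (hlam₁ : 0 ≤ lam₁) (hlam₂ : 0 < lam₂) (hβ : 0 ≤ β)
    (hz : z ∈ OmegaLev lam₁ lam₂ β θ X) (i : Fin N₁) (n : Fin N) :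
    |∑ j, z.1 i j * X j n| ≤ √(N₁ * N₀ * θ / lam₂) * Xcol1 X :=
  (abs_sum_mul_le (OmegaLev.abs_W_le hlam₁ hlam₂ hβ hz i)).trans
    (mul_le_mul_of_nonneg_left (sum_abs_le_Xcol1 X n) (Real.sqrt_nonneg _))

lemma OmegaLev.abs_sum_W_V_le (hlam₁ : 0 < lam₁) (hlam₂ : 0 < lam₂) (hβ : 0 ≤ β)
    (hz : z ∈ OmegaLev lam₁ lam₂ β θ X) (j : Fin N₀) (n : Fin N) :
    |∑ i, z.1 i j * z.2.2.2 i n| ≤ √(N₁ * N₀ * θ / lam₂) * (θ / lam₁) := by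
  refine (abs_sum_mul_le fun i => OmegaLev.abs_W_le hlam₁.le hlam₂ hβ hz i j).trans ?_
  simp only [abs_of_nonneg (Omega2.V_nonneg hz.1 _ n)]
  exact mul_le_mul_of_nonneg_left (OmegaLev.sum_V_le hlam₁ hlam₂.le hβ hz n) (Real.sqrt_nonneg _)

lemma OmegaLev.b₁_le (hlam₁ : 0 < lam₁) (hlam₂ : 0 < lam₂) (hβ : 0 ≤ β)
    (hz : z ∈ OmegaLev lam₁ lam₂ β θ X) (i : Fin N₁) (n : Fin N) :
    z.2.1 i ≤ θ / lam₁ + √(N₁ * N₀ * θ / lam₂) * Xcol1 X := by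
  have hpre : preact X z i n ≤ θ / lam₁ :=
    calc preact X z i n ≤ relu (preact X z i n) := le_relu _
      _ ≤ z.2.2.2 i n := hz.1 i n
      _ ≤ ∑ i, z.2.2.2 i n := single_le_sum (fun i _ => Omega2.V_nonneg hz.1 i n) (mem_univ i)
      _ ≤ θ / lam₁ := OmegaLev.sum_V_le hlam₁ hlam₂.le hβ hz n
  have hWX := (neg_abs_le _).trans' (neg_le_neg (OmegaLev.abs_sum_W_X_le hlam₁.le hlam₂ hβ hz i n))
  unfold preact at hpre
  linarith

lemma OmegaLev.b₂_le (hlam₁ : 0 < lam₁) (hlam₂ : 0 < lam₂) (hβ : 0 ≤ β)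
    (hz : z ∈ OmegaLev lam₁ lam₂ β θ X) (j : Fin N₀) (n : Fin N) :
    z.2.2.1 j ≤ Xcol1 X + √(N * θ) + √(N₁ * N₀ * θ / lam₂) * (θ / lam₁) := by
  have hout := (le_relu _).trans (OmegaLev.relu_outPre_le hlam₁.le hlam₂.le hβ hz j n)
  have hWV := (neg_abs_le _).trans' (neg_le_neg (OmegaLev.abs_sum_W_V_le hlam₁ hlam₂ hβ hz j n))
  unfold outPre at hout
  linarith

lemma OmegaLev.sum_W_X_le_alphaC (hlam₁ : 0 < lam₁) (hlam₂ : 0 < lam₂) (hβ : 0 ≤ β)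
    (hz : z ∈ OmegaLev lam₁ lam₂ β θ X) (i : Fin N₁) (n : Fin N) :
    ∑ j, z.1 i j * X j n ≤ alphaC N N₀ N₁ lam₁ lam₂ θ X := by
  have hθ := OmegaLev.theta_nonneg hlam₁.le hlam₂.le hβ hz
  calc ∑ j, z.1 i j * X j n ≤ √(N₁ * N₀ * θ / lam₂) * Xcol1 X :=
        (le_abs_self _).trans (OmegaLev.abs_sum_W_X_le hlam₁.le hlam₂ hβ hz i n)
    _ ≤ θ / lam₁ + √(N₁ * N₀ * θ / lam₂) * Xcol1 X := le_add_of_nonneg_left (by positivity)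
    _ ≤ alphaC N N₀ N₁ lam₁ lam₂ θ X := le_alphaC_left

lemma OmegaLev.sum_W_V_le_alphaC (hlam₁ : 0 < lam₁) (hlam₂ : 0 < lam₂) (hβ : 0 ≤ β)
    (hz : z ∈ OmegaLev lam₁ lam₂ β θ X) (j : Fin N₀) (n : Fin N) :
    ∑ i, z.1 i j * z.2.2.2 i n ≤ alphaC N N₀ N₁ lam₁ lam₂ θ X :=
  calc ∑ i, z.1 i j * z.2.2.2 i n ≤ √(N₁ * N₀ * θ / lam₂) * (θ / lam₁) :=
        (le_abs_self _).trans (OmegaLev.abs_sum_W_V_le hlam₁ hlam₂ hβ hz j n)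
    _ ≤ Xcol1 X + √(N * θ) + √(N₁ * N₀ * θ / lam₂) * (θ / lam₁) :=
        le_add_of_nonneg_left (add_nonneg (Xcol1_nonneg X) (Real.sqrt_nonneg _))
    _ ≤ alphaC N N₀ N₁ lam₁ lam₂ θ X := le_alphaC_right hlam₂.le

lemma OmegaLev.Ov_clipBias_alphaC (hlam₁ : 0 < lam₁) (hlam₂ : 0 < lam₂) (hβ : 0 ≤ β)
    (hz : z ∈ OmegaLev lam₁ lam₂ β θ X) :
    Ov lam₁ lam₂ β X (clipBias (alphaC N N₀ N₁ lam₁ lam₂ θ X) z) = Ov lam₁ lam₂ β X z :=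
  Ov_clipBias _ _ _ (OmegaLev.sum_W_X_le_alphaC hlam₁ hlam₂ hβ hz)
    (OmegaLev.sum_W_V_le_alphaC hlam₁ hlam₂ hβ hz)

lemma OmegaLev.clipBias_alphaC_mem_Zset (hlam₁ : 0 < lam₁) (hlam₂ : 0 < lam₂) (hβ : 0 ≤ β)
    (hz : z ∈ OmegaLev lam₁ lam₂ β θ X) (n : Fin N) :
    clipBias (alphaC N N₀ N₁ lam₁ lam₂ θ X) z ∈ Zset lam₁ lam₂ θ X := by
  have hα : 0 ≤ alphaC N N₀ N₁ lam₁ lam₂ θ X :=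
    alphaC_nonneg hlam₁.le (OmegaLev.theta_nonneg hlam₁.le hlam₂.le hβ hz)
  exact ⟨clipBias_mem_Omega2 hz.1 (OmegaLev.sum_W_X_le_alphaC hlam₁ hlam₂ hβ hz),
    fun i => abs_max_neg_le ((OmegaLev.b₁_le hlam₁ hlam₂ hβ hz i n).trans le_alphaC_left) hα,
    fun j => abs_max_neg_le
      ((OmegaLev.b₂_le hlam₁ hlam₂ hβ hz j n).trans (le_alphaC_right hlam₂.le)) hα⟩

end OmegaLev

theorem stmt11_general (N N₀ N₁ : ℕ) (hN : 0 < N)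
    (lam₁ lam₂ β θ : ℝ) (hlam₁ : 0 < lam₁) (hlam₂ : 0 < lam₂) (hbeta : 0 < β)
    (X : Matrix (Fin N₀) (Fin N) ℝ)
    (zb : Pt N N₀ N₁) (hzbLev : zb ∈ OmegaLev lam₁ lam₂ β θ X)
    (hzbZ : zb ∈ Zset lam₁ lam₂ θ X)
    (hloc : ∃ ε : ℝ, 0 < ε ∧ ∀ z : Pt N N₀ N₁, z ∈ Zset lam₁ lam₂ θ X → distPt z zb ≤ ε →
      Ov lam₁ lam₂ β X zb ≤ Ov lam₁ lam₂ β X z) :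
    zb ∈ Omega2 X ∧
    ∃ ε : ℝ, 0 < ε ∧ ∀ z : Pt N N₀ N₁, z ∈ Omega2 X → distPt z zb ≤ ε →
      Ov lam₁ lam₂ β X zb ≤ Ov lam₁ lam₂ β X z := by
  obtain ⟨ε, hε, hmin⟩ := hloc
  refine ⟨hzbZ.1, ε, hε, fun z hz hdist => ?_⟩
  rcases le_or_gt (Ov lam₁ lam₂ β X zb) (Ov lam₁ lam₂ β X z) with hle | hlt
  · exact hle
  have hzLev : z ∈ OmegaLev lam₁ lam₂ β θ X := ⟨hz, hlt.le.trans hzbLev.2⟩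
  have hcloser : distPt (clipBias (alphaC N N₀ N₁ lam₁ lam₂ θ X) z) zb ≤ ε :=
    (distPt_clipBias_le (fun i => neg_le_of_abs_le (hzbZ.2.1 i))
      (fun j => neg_le_of_abs_le (hzbZ.2.2 j))).trans hdist
  calc Ov lam₁ lam₂ β X zb
      ≤ Ov lam₁ lam₂ β X (clipBias (alphaC N N₀ N₁ lam₁ lam₂ θ X) z) :=
        hmin _ (OmegaLev.clipBias_alphaC_mem_Zset hlam₁ hlam₂ hbeta.le hzLev ⟨0, hN⟩) hcloser
    _ = Ov lam₁ lam₂ β X z := OmegaLev.Ov_clipBias_alphaC hlam₁ hlam₂ hbeta.le hzLev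

theorem stmt11 (N N₀ N₁ : ℕ) (hN : 0 < N) (hN₀ : 0 < N₀) (hN₁ : 0 < N₁)
    (lam₁ lam₂ β θ : ℝ) (hlam₁ : 0 < lam₁) (hlam₂ : 0 < lam₂) (hbeta : 0 < β)
    (X : Matrix (Fin N₀) (Fin N) ℝ)
    (hθ : (1 / (N : ℝ)) * ∑ j, ∑ n, (X j n) ^ 2 < θ)
    (zb : Pt N N₀ N₁) (hzbLev : zb ∈ OmegaLev lam₁ lam₂ β θ X)
    (hzbZ : zb ∈ Zset lam₁ lam₂ θ X)
    (hloc : ∃ ε : ℝ, 0 < ε ∧ ∀ z : Pt N N₀ N₁, z ∈ Zset lam₁ lam₂ θ X → distPt z zb ≤ ε →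
      Ov lam₁ lam₂ β X zb ≤ Ov lam₁ lam₂ β X z) :
    zb ∈ Omega2 X ∧
    ∃ ε : ℝ, 0 < ε ∧ ∀ z : Pt N N₀ N₁, z ∈ Omega2 X → distPt z zb ≤ ε →
      Ov lam₁ lam₂ β X zb ≤ Ov lam₁ lam₂ β X z :=
  stmt11_general N N₀ N₁ hN lam₁ lam₂ β θ hlam₁ hlam₂ hbeta X zb hzbLev hzbZ hloc
end
end

section
/- Let z̄ ∈ Ω₁ and let d belong to the tangent cone T_{Ω₁}(z̄) of Ω₁ at z̄. Then lim_{t↓0} P(z̄ + t d)/t = 0; that is, the one-sided directional derivative of P at z̄ along d exists and equals 0 (note P(z̄) = 0 since z̄ ∈ Ω₁). -/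
open scoped BigOperators

noncomputable section

variable {N N₀ N₁ : ℕ}

/-!
Each constraint of `Ω₁` reads `v = relu a` with `v` a coordinate and `a` an affine function
of `z`. Since `relu` is piecewise linear, `relu (a + t c) = relu a + t relu'(a; c)` for all small
`t > 0`, and since it is 1-Lipschitz, a tangent direction `d` at `z̄` must have `v`-component
`relu'(a; c)`, `c` being the `a`-component of `d`. So the ray `z̄ + t d` stays in `Ω₁` for small
`t > 0`, and `P` vanishes on `Ω₁`.
-/

open Filter Topology

lemma relu_of_nonpos {y : ℝ} (h : y ≤ 0) : relu y = 0 := max_eq_right h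

lemma relu_of_nonneg {y : ℝ} (h : 0 ≤ y) : relu y = y := max_eq_left h

lemma relu_mul_of_nonneg {t : ℝ} (ht : 0 ≤ t) (y : ℝ) : relu (t * y) = t * relu y := by
  rw [relu, relu, mul_max_of_nonneg _ _ ht, mul_zero]

lemma abs_relu_sub_relu_le (x y : ℝ) : |relu x - relu y| ≤ |x - y| :=
  abs_max_sub_max_le_abs x y 0

def reluDirDeriv (a c : ℝ) : ℝ :=
  if a < 0 then 0 else if 0 < a then c else relu c

lemma eventually_relu_add_mul (a c : ℝ) :
    ∀ᶠ t in 𝓝[>] (0 : ℝ), relu (a + t * c) = relu a + t * reluDirDeriv a c := by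
  have hcont : Tendsto (fun t : ℝ => a + t * c) (𝓝[>] 0) (𝓝 a) :=
    tendsto_nhdsWithin_of_tendsto_nhds <|
      (continuous_const.add (continuous_id.mul continuous_const)).tendsto' 0 a (by simp)
  rcases lt_trichotomy a 0 with ha | rfl | ha
  · filter_upwards [hcont.eventually_lt_const ha] with t ht
    simp [reluDirDeriv, ha, relu_of_nonpos ha.le, relu_of_nonpos ht.le]
  · filter_upwards [self_mem_nhdsWithin] with t (ht : 0 < t)
    simp [reluDirDeriv, relu_mul_of_nonneg ht.le, relu_of_nonpos le_rfl]
  · filter_upwards [hcont.eventually_const_lt ha] with t ht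
    simp [reluDirDeriv, ha, ha.not_gt, relu_of_nonneg ha.le, relu_of_nonneg ht.le]

lemma tendsto_relu_slope (a c : ℝ) :
    Tendsto (fun t => (relu (a + t * c) - relu a) / t) (𝓝[>] 0) (𝓝 (reluDirDeriv a c)) := by
  refine tendsto_const_nhds.congr' ?_
  filter_upwards [eventually_relu_add_mul a c, self_mem_nhdsWithin] with t h (ht : 0 < t)
  rw [h, add_sub_cancel_left, mul_div_cancel_left₀ _ ht.ne']

lemma eq_reluDirDeriv_of_tendsto {ι : Type*} {l : Filter ι} [l.NeBot] {a c v : ℝ}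
    {ts cs vs : ι → ℝ} (hts : Tendsto ts l (𝓝[>] 0)) (hcs : Tendsto cs l (𝓝 c))
    (hvs : Tendsto vs l (𝓝 v)) (h : ∀ᶠ k in l, relu a + ts k * vs k = relu (a + ts k * cs k)) :
    v = reluDirDeriv a c := by
  refine tendsto_nhds_unique hvs ?_
  have hslope : Tendsto (fun k => (relu (a + ts k * c) - relu a) / ts k) l
      (𝓝 (reluDirDeriv a c)) := (tendsto_relu_slope a c).comp hts
  have hgap : Tendsto (fun k => |cs k - c|) l (𝓝 0) := by
    simpa using (tendsto_sub_nhds_zero_iff.2 hcs).abs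
  -- `relu` is 1-Lipschitz, so perturbing `c` by `cs k - c` moves the slope by at most that much.
  have hclose : ∀ᶠ k in l, ‖vs k - (relu (a + ts k * c) - relu a) / ts k‖ ≤ |cs k - c| := by
    filter_upwards [h, hts.eventually self_mem_nhdsWithin] with k hk (hk0 : 0 < ts k)
    have hvs : vs k = (relu (a + ts k * cs k) - relu a) / ts k := by
      rw [← hk, add_sub_cancel_left, mul_div_cancel_left₀ _ hk0.ne']
    rw [hvs, ← sub_div, Real.norm_eq_abs, abs_div, abs_of_pos hk0, div_le_iff₀ hk0]
    calc |relu (a + ts k * cs k) - relu a - (relu (a + ts k * c) - relu a)|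
        ≤ |a + ts k * cs k - (a + ts k * c)| := by
          rw [sub_sub_sub_cancel_right]; exact abs_relu_sub_relu_le _ _
      _ = |cs k - c| * ts k := by
          rw [add_sub_add_left_eq_sub, ← mul_sub, abs_mul, abs_of_pos hk0, mul_comm]
  simpa using (squeeze_zero_norm' hclose hgap).add hslope

lemma eventually_relu_add_mul_of_tendsto {ι : Type*} {l : Filter ι} [l.NeBot] {a c v : ℝ}
    {ts cs vs : ι → ℝ} (hts : Tendsto ts l (𝓝[>] 0)) (hcs : Tendsto cs l (𝓝 c))
    (hvs : Tendsto vs l (𝓝 v)) (h : ∀ᶠ k in l, relu a + ts k * vs k = relu (a + ts k * cs k)) :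
    ∀ᶠ t in 𝓝[>] (0 : ℝ), relu a + t * v = relu (a + t * c) := by
  rw [eq_reluDirDeriv_of_tendsto hts hcs hvs h]
  filter_upwards [eventually_relu_add_mul a c] with t ht using ht.symm

lemma preact_add (X : Matrix (Fin N₀) (Fin N) ℝ) (z z' : Pt N N₀ N₁) (i : Fin N₁) (n : Fin N) :
    preact X (z + z') i n = preact X z i n + preact X z' i n := by
  simp only [preact, Prod.fst_add, Prod.snd_add, Matrix.add_apply, Pi.add_apply, add_mul,
    Finset.sum_add_distrib]
  ring

lemma preact_smul (X : Matrix (Fin N₀) (Fin N) ℝ) (t : ℝ) (z : Pt N N₀ N₁) (i : Fin N₁)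
    (n : Fin N) : preact X (t • z) i n = t * preact X z i n := by
  simp [preact, Finset.mul_sum, mul_add, mul_assoc]

lemma continuous_preact (X : Matrix (Fin N₀) (Fin N) ℝ) (i : Fin N₁) (n : Fin N) :
    Continuous fun z : Pt N N₀ N₁ => preact X z i n := by
  unfold preact; fun_prop

lemma sq_le_sum_sum_sq {α γ : Type*} [Fintype α] [Fintype γ] (f : α → γ → ℝ) (i : α) (j : γ) :
    f i j ^ 2 ≤ ∑ a, ∑ b, f a b ^ 2 :=
  (Finset.single_le_sum (fun b _ => sq_nonneg (f i b)) (Finset.mem_univ j)).trans <|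
    Finset.single_le_sum (f := fun a => ∑ b, f a b ^ 2)
      (fun _ _ => Finset.sum_nonneg fun _ _ => sq_nonneg _) (Finset.mem_univ i)

lemma abs_le_normPt_of_sq_le {z : Pt N N₀ N₁} {x : ℝ} (h : x ^ 2 ≤ sqnormPt z) :
    |x| ≤ normPt z := by
  rw [← Real.sqrt_sq_eq_abs]
  exact Real.sqrt_le_sqrt h

lemma sum_sq_le_sqnormPt (z : Pt N N₀ N₁) :
    ∑ i, ∑ j, z.1 i j ^ 2 ≤ sqnormPt z ∧ ∑ i, z.2.1 i ^ 2 ≤ sqnormPt z ∧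
      ∑ j, z.2.2.1 j ^ 2 ≤ sqnormPt z ∧ ∑ i, ∑ n, z.2.2.2 i n ^ 2 ≤ sqnormPt z := by
  have : 0 ≤ ∑ i, ∑ j, z.1 i j ^ 2 := by positivity
  have : 0 ≤ ∑ i, z.2.1 i ^ 2 := by positivity
  have : 0 ≤ ∑ j, z.2.2.1 j ^ 2 := by positivity
  have : 0 ≤ ∑ i, ∑ n, z.2.2.2 i n ^ 2 := by positivity
  unfold sqnormPt
  refine ⟨?_, ?_, ?_, ?_⟩ <;> linarith

lemma abs_W_le_normPt (z : Pt N N₀ N₁) (i : Fin N₁) (j : Fin N₀) : |z.1 i j| ≤ normPt z :=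
  abs_le_normPt_of_sq_le <| (sq_le_sum_sum_sq z.1 i j).trans (sum_sq_le_sqnormPt z).1

lemma abs_b₁_le_normPt (z : Pt N N₀ N₁) (i : Fin N₁) : |z.2.1 i| ≤ normPt z :=
  abs_le_normPt_of_sq_le <| (Finset.single_le_sum (fun i _ => sq_nonneg (z.2.1 i))
    (Finset.mem_univ i)).trans (sum_sq_le_sqnormPt z).2.1

lemma abs_b₂_le_normPt (z : Pt N N₀ N₁) (j : Fin N₀) : |z.2.2.1 j| ≤ normPt z :=
  abs_le_normPt_of_sq_le <| (Finset.single_le_sum (fun j _ => sq_nonneg (z.2.2.1 j))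
    (Finset.mem_univ j)).trans (sum_sq_le_sqnormPt z).2.2.1

lemma abs_V_le_normPt (z : Pt N N₀ N₁) (i : Fin N₁) (n : Fin N) : |z.2.2.2 i n| ≤ normPt z :=
  abs_le_normPt_of_sq_le <| (sq_le_sum_sum_sq z.2.2.2 i n).trans (sum_sq_le_sqnormPt z).2.2.2

lemma tendsto_of_tendsto_normPt_sub {ι : Type*} {l : Filter ι} {w : ι → Pt N N₀ N₁}
    {d : Pt N N₀ N₁} (h : Tendsto (fun k => normPt (w k - d)) l (𝓝 0)) : Tendsto w l (𝓝 d) := by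
  rw [← tendsto_sub_nhds_zero_iff]
  have coord {f : Pt N N₀ N₁ → ℝ} (hf : ∀ z, |f z| ≤ normPt z) :
      Tendsto (fun k => f (w k - d)) l (𝓝 0) :=
    squeeze_zero_norm (fun k => hf _) h
  refine Prod.tendsto_iff _ _ |>.2 ⟨?_, Prod.tendsto_iff _ _ |>.2
    ⟨?_, Prod.tendsto_iff _ _ |>.2 ⟨?_, ?_⟩⟩⟩
  · exact tendsto_pi_nhds.2 fun i => tendsto_pi_nhds.2 fun j => coord (abs_W_le_normPt · i j)
  · exact tendsto_pi_nhds.2 fun i => coord (abs_b₁_le_normPt · i)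
  · exact tendsto_pi_nhds.2 fun j => coord (abs_b₂_le_normPt · j)
  · exact tendsto_pi_nhds.2 fun i => tendsto_pi_nhds.2 fun n => coord (abs_V_le_normPt · i n)

lemma Pv_eq_zero_of_mem_Omega1 (β : ℝ) {X : Matrix (Fin N₀) (Fin N) ℝ} {z : Pt N N₀ N₁}
    (hz : z ∈ Omega1 X) : Pv β X z = 0 := by
  simp [Pv, fun i n => sub_eq_zero.2 (hz i n)]

lemma eventually_add_smul_mem_Omega1 {X : Matrix (Fin N₀) (Fin N) ℝ} {zb d : Pt N N₀ N₁}
    (hzb : zb ∈ Omega1 X) (hd : d ∈ TangentCone (Omega1 X) zb) :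
    ∀ᶠ t in 𝓝[>] (0 : ℝ), zb + t • d ∈ Omega1 X := by
  obtain ⟨zs, ts, hmem, hpos, hts, -, hconv⟩ := hd
  set w : ℕ → Pt N N₀ N₁ := fun k => (ts k)⁻¹ • (zs k - zb)
  have hw : Tendsto w atTop (𝓝 d) := tendsto_of_tendsto_normPt_sub hconv
  have hts' : Tendsto ts atTop (𝓝[>] 0) :=
    tendsto_nhdsWithin_iff.2 ⟨hts, Eventually.of_forall hpos⟩
  have hzs (k : ℕ) : zs k = zb + ts k • w k := by
    simp [w, smul_smul, mul_inv_cancel₀ (hpos k).ne']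
  simp only [Omega1, Set.mem_ofPred_eq, eventually_all]
  intro i n
  have hray := eventually_relu_add_mul_of_tendsto hts'
    (((continuous_preact X i n).tendsto d).comp hw)
    (((by fun_prop : Continuous fun z : Pt N N₀ N₁ => z.2.2.2 i n).tendsto d).comp hw)
    (Eventually.of_forall fun k => by
      have := hmem k i n
      rw [hzs k, preact_add, preact_smul] at this
      simpa [hzb i n] using this)
  filter_upwards [hray] with t ht
  simpa [preact_add, preact_smul, hzb i n] using ht

theorem stmt15_general (N N₀ N₁ : ℕ)
    (β : ℝ) (X : Matrix (Fin N₀) (Fin N) ℝ)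
    (zb : Pt N N₀ N₁) (hzb : zb ∈ Omega1 X)
    (d : Pt N N₀ N₁) (hd : d ∈ TangentCone (Omega1 X) zb) :
    Pv β X zb = 0 ∧
    Filter.Tendsto (fun t : ℝ => (Pv β X (zb + t • d) - Pv β X zb) / t)
      (nhdsWithin 0 (Set.Ioi 0)) (nhds 0) := by
  refine ⟨Pv_eq_zero_of_mem_Omega1 β hzb, tendsto_const_nhds.congr' ?_⟩
  filter_upwards [eventually_add_smul_mem_Omega1 hzb hd] with t ht
  rw [Pv_eq_zero_of_mem_Omega1 β ht, Pv_eq_zero_of_mem_Omega1 β hzb, sub_zero, zero_div]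

theorem stmt15 (N N₀ N₁ : ℕ) (hN : 0 < N) (hN₀ : 0 < N₀) (hN₁ : 0 < N₁)
    (β : ℝ) (hbeta : 0 < β) (X : Matrix (Fin N₀) (Fin N) ℝ)
    (zb : Pt N N₀ N₁) (hzb : zb ∈ Omega1 X)
    (d : Pt N N₀ N₁) (hd : d ∈ TangentCone (Omega1 X) zb) :
    Pv β X zb = 0 ∧
    Filter.Tendsto (fun t : ℝ => (Pv β X (zb + t • d) - Pv β X zb) / t)
      (nhdsWithin 0 (Set.Ioi 0)) (nhds 0) :=
  stmt15_general N N₀ N₁ β X zb hzb d hd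
end
end

section
/- Let 0 < τ₁ < 1 and τ₂ > 0. Let {a_k}, {μ_k}, {L_k} be sequences of real numbers with a_k ≥ 0, μ_k > 0, L_k > 0, and a_{k+1} ≤ a_k for all k, and suppose that for every k at least one of the following holds: (i) a_{k+1} ≤ a_k − τ₂ μ_k / L_k, μ_{k+1} = μ_k and L_{k+1} = L_k; or (ii) μ_{k+1} = τ₁ μ_k. Then μ_k → 0 as k → ∞. (This is the mechanism by which the smoothing parameters μ^{(k)} of the smoothing proximal gradient algorithm, whose objective values Õ(z^{(k)}, μ^{(k)}) are nonnegative and non-increasing, converge to zero.) -/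
open scoped BigOperators

noncomputable section

variable {N N₀ N₁ : ℕ}

/-! The parameters μ are non-increasing, hence converge to some ℓ ≥ 0. They are multiplied by τ₁
infinitely often: otherwise μ and L are frozen from some index on, and every later step lowers the
nonnegative a by the same positive amount τ₂ μ / L. Passing to the limit along those indices in
μ (k + 1) = τ₁ μ k gives ℓ = τ₁ ℓ, so ℓ = 0. -/

section SmoothingParameter

open Filter Topology

theorem not_forall_succ_le_sub_of_nonneg {a : ℕ → ℝ} {c : ℝ} (ha : ∀ n, 0 ≤ a n) (hc : 0 < c) :
    ¬ ∀ n, a (n + 1) ≤ a n - c := by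
  intro hdec
  have hle : ∀ n : ℕ, a n ≤ a 0 - n * c := by
    intro n
    induction n with
    | zero => simp
    | succ n ih => push_cast; linarith [hdec n]
  obtain ⟨n, hn⟩ := exists_nat_gt (a 0 / c)
  have := (div_lt_iff₀ hc).mp hn
  linarith [ha n, hle n]

theorem eq_zero_of_tendsto_of_frequently_succ_eq_mul {𝕜 : Type*} [Field 𝕜] [TopologicalSpace 𝕜]
    [IsTopologicalRing 𝕜] [T2Space 𝕜] {μ : ℕ → 𝕜} {ℓ τ : 𝕜}
    (hμ : Tendsto μ atTop (𝓝 ℓ)) (hτ : τ ≠ 1) (h : ∃ᶠ k in atTop, μ (k + 1) = τ * μ k) :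
    ℓ = 0 := by
  have hfix : ℓ = τ * ℓ :=
    (isClosed_eq continuous_fst (continuous_const.mul continuous_snd)).mem_of_frequently_of_tendsto
      h (((tendsto_add_atTop_iff_nat 1).mpr hμ).prodMk_nhds hμ)
  have : (1 - τ) * ℓ = 0 := by rw [sub_mul, one_mul, ← hfix, sub_self]
  exact (mul_eq_zero.mp this).resolve_left (sub_ne_zero.mpr hτ.symm)

variable {τ₁ τ₂ : ℝ} {a μ L : ℕ → ℝ}

def SufficientDecreaseStep (τ₂ : ℝ) (a μ L : ℕ → ℝ) (k : ℕ) : Prop :=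
  a (k + 1) ≤ a k - τ₂ * μ k / L k ∧ μ (k + 1) = μ k ∧ L (k + 1) = L k

theorem not_eventually_sufficientDecreaseStep (hτ₂ : 0 < τ₂) (ha : ∀ k, 0 ≤ a k)
    (hμ : ∀ k, 0 < μ k) (hL : ∀ k, 0 < L k) :
    ¬ ∀ᶠ k in atTop, SufficientDecreaseStep τ₂ a μ L k := by
  intro hev
  obtain ⟨K, hK⟩ := eventually_atTop.mp hev
  have hconst : ∀ n, μ (K + n) = μ K ∧ L (K + n) = L K := by
    intro n
    induction n with
    | zero => exact ⟨rfl, rfl⟩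
    | succ n ih =>
      obtain ⟨-, hμn, hLn⟩ := hK (K + n) (Nat.le_add_right K n)
      exact ⟨hμn.trans ih.1, hLn.trans ih.2⟩
  refine not_forall_succ_le_sub_of_nonneg (a := fun n ↦ a (K + n)) (fun n ↦ ha _)
    (div_pos (mul_pos hτ₂ (hμ K)) (hL K)) fun n ↦ ?_
  have hdec := (hK (K + n) (Nat.le_add_right K n)).1
  rwa [(hconst n).1, (hconst n).2] at hdec

theorem frequently_succ_eq_mul_of_step (hτ₂ : 0 < τ₂) (ha : ∀ k, 0 ≤ a k)
    (hμ : ∀ k, 0 < μ k) (hL : ∀ k, 0 < L k)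
    (hstep : ∀ k, SufficientDecreaseStep τ₂ a μ L k ∨ μ (k + 1) = τ₁ * μ k) :
    ∃ᶠ k in atTop, μ (k + 1) = τ₁ * μ k := fun hnot ↦
  not_eventually_sufficientDecreaseStep hτ₂ ha hμ hL <|
    hnot.mono fun k hk ↦ (hstep k).resolve_right hk

theorem antitone_of_step (hτ₁ : τ₁ ≤ 1) (hμ : ∀ k, 0 ≤ μ k)
    (hstep : ∀ k, SufficientDecreaseStep τ₂ a μ L k ∨ μ (k + 1) = τ₁ * μ k) : Antitone μ := by
  refine antitone_nat_of_succ_le fun k ↦ ?_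
  rcases hstep k with ⟨-, hμk, -⟩ | hμk
  · exact hμk.le
  · rw [hμk]
    exact mul_le_of_le_one_left (hμ k) hτ₁

end SmoothingParameter

theorem stmt18_general (τ₁ τ₂ : ℝ) (hτ₁' : τ₁ < 1) (hτ₂ : 0 < τ₂)
    (a μ L : ℕ → ℝ) (ha : ∀ k, 0 ≤ a k) (hμ : ∀ k, 0 < μ k) (hL : ∀ k, 0 < L k)
    (hstep : ∀ k,
      (a (k + 1) ≤ a k - τ₂ * μ k / L k ∧ μ (k + 1) = μ k ∧ L (k + 1) = L k) ∨
      μ (k + 1) = τ₁ * μ k) :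
    Filter.Tendsto μ Filter.atTop (nhds 0) := by
  have hlim := tendsto_atTop_ciInf (antitone_of_step hτ₁'.le (fun k ↦ (hμ k).le) hstep)
    ⟨0, Set.forall_mem_range.mpr fun k ↦ (hμ k).le⟩
  rwa [eq_zero_of_tendsto_of_frequently_succ_eq_mul hlim hτ₁'.ne
    (frequently_succ_eq_mul_of_step hτ₂ ha hμ hL hstep)] at hlim

theorem stmt18 (τ₁ τ₂ : ℝ) (hτ₁ : 0 < τ₁) (hτ₁' : τ₁ < 1) (hτ₂ : 0 < τ₂)
    (a μ L : ℕ → ℝ) (ha : ∀ k, 0 ≤ a k) (hμ : ∀ k, 0 < μ k) (hL : ∀ k, 0 < L k)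
    (hmono : ∀ k, a (k + 1) ≤ a k)
    (hstep : ∀ k,
      (a (k + 1) ≤ a k - τ₂ * μ k / L k ∧ μ (k + 1) = μ k ∧ L (k + 1) = L k) ∨
      μ (k + 1) = τ₁ * μ k) :
    Filter.Tendsto μ Filter.atTop (nhds 0) :=
  stmt18_general τ₁ τ₂ hτ₁' hτ₂ a μ L ha hμ hL hstep
end
end
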